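/- For any graph G obtained from a graph H by attaching a pendant vertex to every vertex of H and subdividing every edge of H with a new vertex, the open-neighborhood conflict-free chromatic number of G equals the chromatic number of H, and G is bipartite; moreover G is planar if H is planar. -/

import Mathlib

open SimpleGraph

/-- An open-neighborhood conflict-free `k`-coloring. -/
def IsOpenCFColoring {V : Type*} (G : SimpleGraph V) (k : ℕ) (c : V → Option (Fin k)) : Prop :=
  ∀ v : V, ∃ w ∈ G.neighborSet v, ∃ col : Fin k, c w = some col ∧
    ∀ u ∈ G.neighborSet v, c u = some col → u = w

/-- `HasMinor G H` : `H` is a minor of `G`. -/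
def HasMinor {V W : Type*} (G : SimpleGraph V) (H : SimpleGraph W) : Prop :=
  ∃ f : W → Set V,
    (∀ w, (f w).Nonempty) ∧
    (∀ w, (G.induce (f w)).Connected) ∧
    (Pairwise fun w w' => Disjoint (f w) (f w')) ∧
    ∀ ⦃w w'⦄, H.Adj w w' → ∃ a ∈ f w, ∃ b ∈ f w', G.Adj a b

/-- Planarity, via Wagner's characterization. -/
def IsPlanar {V : Type*} (G : SimpleGraph V) : Prop :=
  ¬ HasMinor G (⊤ : SimpleGraph (Fin 5)) ∧
  ¬ HasMinor G (completeBipartiteGraph (Fin 3) (Fin 3))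

/-- The graph obtained from `H` by attaching a pendant vertex `Sum.inr (Sum.inl v)` to
every original vertex `Sum.inl v`, and subdividing every edge `e` by a new midpoint
vertex `Sum.inr (Sum.inr e)`. -/
def pendantSubdiv {V : Type*} (H : SimpleGraph V) :
    SimpleGraph (V ⊕ (V ⊕ H.edgeSet)) :=
  SimpleGraph.fromRel (fun x y =>
    match x, y with
    | Sum.inl v, Sum.inr (Sum.inl w) => v = w
    | Sum.inl v, Sum.inr (Sum.inr e) => v ∈ (e : Sym2 V)
    | _, _ => False)

/-!
A conflict-free colouring has to colour every vertex `v` of `H`, the only neighbour of its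
pendant, and the midpoint of an edge `uv` sees only `u` and `v`, which therefore get different
colours: restricted to `V(H)` it is a proper colouring of `H`. Conversely, a proper colouring of
`H`, copied onto the pendants and leaving the midpoints uncoloured, is conflict-free: `v` sees its
pendant as its only coloured neighbour, and a midpoint sees two differently coloured vertices.
The graph is bipartite with the old vertices on one side and the new ones on the other.

For planarity, intersect the branch sets of a `K₅` or `K₃,₃` minor model with `V(H)`. Since both
graphs have minimum degree three, no branch set is a single new vertex (of degree at most two), so
every new vertex of a branch set has an old neighbour in the same set. Adjacent vertices of the
subdivision lie over equal or adjacent vertices of `H`, so the intersected branch sets are still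
connected and joined along the edges of the minor.
-/

instance {X Y : Type*} : DecidableRel (completeBipartiteGraph X Y).Adj :=
  fun v w => inferInstanceAs (Decidable (v.isLeft ∧ w.isRight ∨ v.isRight ∧ w.isLeft))

lemma SimpleGraph.encard_neighborSet_eq_degree {W : Type*} (K : SimpleGraph W) (w : W)
    [Fintype (K.neighborSet w)] : (K.neighborSet w).encard = K.degree w := by
  rw [← coe_neighborFinset, Set.encard_coe_eq_coe_finsetCard, card_neighborFinset_eq_degree]

lemma SimpleGraph.eq_or_adj_of_mem_edge {V : Type*} {H : SimpleGraph V} (e : H.edgeSet) {u v : V}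
    (hu : u ∈ (e : Sym2 V)) (hv : v ∈ (e : Sym2 V)) : u = v ∨ H.Adj u v :=
  or_iff_not_imp_left.mpr fun huv => adj_iff_exists_edge.mpr ⟨huv, e, e.2, hu, hv⟩

lemma SimpleGraph.Connected.of_surjective_of_adj_reachable {α β : Type*} {G : SimpleGraph α}
    {G' : SimpleGraph β} (hG : G.Connected) {g : α → β} (hg : g.Surjective)
    (h : ∀ a b, G.Adj a b → G'.Reachable (g a) (g b)) : G'.Connected := by
  have : Nonempty β := hG.nonempty.map g
  refine ⟨fun x y => ?_⟩
  obtain ⟨a, rfl⟩ := hg x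
  obtain ⟨b, rfl⟩ := hg y
  simp only [reachable_iff_reflTransGen] at h ⊢
  exact Relation.ReflTransGen.lift' g h a b ((reachable_iff_reflTransGen a b).mp (hG a b))

namespace IsOpenCFColoring

variable {W : Type*} {G : SimpleGraph W} {k : ℕ} {c : W → Option (Fin k)}

lemma isSome_of_neighborSet_eq_singleton (hc : IsOpenCFColoring G k c) {v w : W}
    (h : G.neighborSet v = {w}) : (c w).isSome := by
  obtain ⟨x, hx, col, hcx, -⟩ := hc v
  rw [h, Set.mem_singleton_iff] at hx
  simp [← hx, hcx]

lemma ne_of_neighborSet_eq_pair (hc : IsOpenCFColoring G k c) {v x y : W}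
    (h : G.neighborSet v = {x, y}) (hxy : x ≠ y) : c x ≠ c y := by
  intro hcxy
  obtain ⟨w, hw, col, hcw, huniq⟩ := hc v
  rw [h] at hw huniq
  rcases hw with rfl | rfl
  · exact hxy (huniq y (by simp) (hcxy ▸ hcw)).symm
  · exact hxy (huniq x (by simp) (hcxy ▸ hcw))

end IsOpenCFColoring

structure IsMinorModel {V W : Type*} (G : SimpleGraph V) (K : SimpleGraph W) (f : W → Set V) :
    Prop where
  nonempty : ∀ w, (f w).Nonempty
  connected : ∀ w, (G.induce (f w)).Connected
  pairwise_disjoint : Pairwise fun w w' => Disjoint (f w) (f w')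
  exists_adj : ∀ ⦃w w'⦄, K.Adj w w' → ∃ a ∈ f w, ∃ b ∈ f w', G.Adj a b

lemma hasMinor_iff {V W : Type*} {G : SimpleGraph V} {K : SimpleGraph W} :
    HasMinor G K ↔ ∃ f, IsMinorModel G K f :=
  ⟨fun ⟨f, h₁, h₂, h₃, h₄⟩ => ⟨f, h₁, h₂, h₃, h₄⟩, fun ⟨f, ⟨h₁, h₂, h₃, h₄⟩⟩ => ⟨f, h₁, h₂, h₃, h₄⟩⟩

/-- Otherwise `f w = {x}`, and the branch sets of the (at least three) neighbours of `w` would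
each have to contain one of the (at most two) neighbours of `x`. -/
lemma IsMinorModel.exists_adj_mem_of_encard_neighborSet_le_two {V W : Type*}
    {G : SimpleGraph V} {K : SimpleGraph W} {f : W → Set V} (hf : IsMinorModel G K f)
    (hK : ∀ w, 2 < (K.neighborSet w).encard) {w : W} {x : V} (hx : x ∈ f w)
    (hdeg : (G.neighborSet x).encard ≤ 2) : ∃ q ∈ f w, G.Adj x q := by
  by_contra! hno
  have hsingle : ∀ a ∈ f w, a = x := by
    intro a ha
    by_contra hax
    have : Nontrivial (f w) := ⟨⟨x, hx⟩, ⟨a, ha⟩, by simpa using Ne.symm hax⟩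
    obtain ⟨q, hq⟩ := (hf.connected w).preconnected.exists_adj_of_nontrivial ⟨x, hx⟩
    exact hno q q.2 hq
  have hnbr : ∀ w' ∈ K.neighborSet w, ∃ b ∈ f w', G.Adj x b := by
    intro w' hw'
    obtain ⟨a, ha, b, hb, hab⟩ := hf.exists_adj hw'
    exact ⟨b, hb, hsingle a ha ▸ hab⟩
  have : Nonempty V := ⟨x⟩
  choose! g hgf hgx using hnbr
  have hinj : Set.InjOn g (K.neighborSet w) := by
    intro w₁ h₁ w₂ h₂ heq
    by_contra hne
    exact Set.disjoint_left.mp (hf.pairwise_disjoint hne) (hgf w₁ h₁) (heq ▸ hgf w₂ h₂)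
  exact (hK w).not_ge ((Set.encard_le_encard_of_injOn hgx hinj).trans hdeg)

namespace pendantSubdiv

variable {V W : Type*} {H : SimpleGraph V}

@[simp]
lemma not_adj_inl_inl (u v : V) : ¬ (pendantSubdiv H).Adj (Sum.inl u) (Sum.inl v) := by
  simp [pendantSubdiv]

@[simp]
lemma not_adj_inr_inr (x y : V ⊕ H.edgeSet) :
    ¬ (pendantSubdiv H).Adj (Sum.inr x) (Sum.inr y) := by
  simp [pendantSubdiv]

@[simp]
lemma adj_inl_pendant (u v : V) :
    (pendantSubdiv H).Adj (Sum.inl u) (Sum.inr (Sum.inl v)) ↔ u = v := by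
  simp [pendantSubdiv]

@[simp]
lemma adj_pendant_inl (u v : V) :
    (pendantSubdiv H).Adj (Sum.inr (Sum.inl v)) (Sum.inl u) ↔ u = v := by
  rw [adj_comm, adj_inl_pendant]

@[simp]
lemma adj_inl_mid (v : V) (e : H.edgeSet) :
    (pendantSubdiv H).Adj (Sum.inl v) (Sum.inr (Sum.inr e)) ↔ v ∈ (e : Sym2 V) := by
  simp [pendantSubdiv]

@[simp]
lemma adj_mid_inl (v : V) (e : H.edgeSet) :
    (pendantSubdiv H).Adj (Sum.inr (Sum.inr e)) (Sum.inl v) ↔ v ∈ (e : Sym2 V) := by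
  rw [adj_comm, adj_inl_mid]

lemma neighborSet_pendant (v : V) :
    (pendantSubdiv H).neighborSet (Sum.inr (Sum.inl v)) = {Sum.inl v} := by
  ext (u | x) <;> simp

lemma neighborSet_mid {u v : V} (huv : H.Adj u v) :
    (pendantSubdiv H).neighborSet (Sum.inr (Sum.inr ⟨s(u, v), huv⟩)) =
      {Sum.inl u, Sum.inl v} := by
  ext (w | x) <;> simp

lemma encard_neighborSet_inr_le_two (x : V ⊕ H.edgeSet) :
    ((pendantSubdiv H).neighborSet (Sum.inr x)).encard ≤ 2 := by
  rcases x with v | ⟨e, he⟩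
  · simp [neighborSet_pendant]
  · induction e using Sym2.ind with | _ u v => ?_
    rw [neighborSet_mid he]
    exact (Set.encard_insert_le _ _).trans (by norm_num)

lemma colorable_two : (pendantSubdiv H).Colorable 2 :=
  ⟨.mk (Sum.elim 0 1) <| by rintro (u | x) (v | y) <;> simp⟩

lemma colorable_of_isOpenCFColoring {k : ℕ} {c : V ⊕ (V ⊕ H.edgeSet) → Option (Fin k)}
    (hc : IsOpenCFColoring (pendantSubdiv H) k c) : H.Colorable k := by
  have hsome (v : V) : (c (Sum.inl v)).isSome :=
    hc.isSome_of_neighborSet_eq_singleton (neighborSet_pendant v)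
  refine ⟨.mk (fun v => (c (Sum.inl v)).get (hsome v)) fun {u v} huv hcol => ?_⟩
  exact hc.ne_of_neighborSet_eq_pair (neighborSet_mid huv) (by simpa using huv.ne)
    (Option.get_inj.mp hcol)

lemma isOpenCFColoring_of_coloring {k : ℕ} (col : H.Coloring (Fin k)) :
    IsOpenCFColoring (pendantSubdiv H) k
      (Sum.elim (some ∘ col) (Sum.elim (some ∘ col) fun _ => none)) := by
  rintro (v | v | ⟨e, he⟩)
  · refine ⟨Sum.inr (Sum.inl v), by simp, col v, rfl, ?_⟩
    rintro (u | u | e) hu hcu <;> simp_all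
  · rw [neighborSet_pendant]
    exact ⟨Sum.inl v, rfl, col v, rfl, fun u hu _ => hu⟩
  · induction e using Sym2.ind with | _ u v => ?_
    rw [neighborSet_mid he]
    refine ⟨Sum.inl u, by simp, col u, rfl, ?_⟩
    rintro w (rfl | rfl) hcw
    · rfl
    · exact absurd (Option.some_inj.mp hcw) (col.valid he).symm

/-- `a = inl u ∨ a ~ inl u` says that `a` lies over `u`: it is `u`, the pendant at `u`, or the
midpoint of an edge at `u`. -/
lemma eq_or_adj_of_adj {a b : V ⊕ (V ⊕ H.edgeSet)} {u v : V} (hab : (pendantSubdiv H).Adj a b)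
    (ha : a = Sum.inl u ∨ (pendantSubdiv H).Adj a (Sum.inl u))
    (hb : b = Sum.inl v ∨ (pendantSubdiv H).Adj b (Sum.inl v)) : u = v ∨ H.Adj u v := by
  rcases a with a | a | e <;> rcases b with b | b | e' <;> simp_all
  · exact eq_or_adj_of_mem_edge e' hab hb
  · exact eq_or_adj_of_mem_edge e ha hab

lemma exists_inl_mem_of_isMinorModel {K : SimpleGraph W} {f : W → Set (V ⊕ (V ⊕ H.edgeSet))}
    (hf : IsMinorModel (pendantSubdiv H) K f) (hK : ∀ w, 2 < (K.neighborSet w).encard) {w : W}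
    {a : V ⊕ (V ⊕ H.edgeSet)} (ha : a ∈ f w) :
    ∃ v, Sum.inl v ∈ f w ∧ (a = Sum.inl v ∨ (pendantSubdiv H).Adj a (Sum.inl v)) := by
  rcases a with v | x
  · exact ⟨v, ha, Or.inl rfl⟩
  obtain ⟨v | y, hq, hxq⟩ :=
    hf.exists_adj_mem_of_encard_neighborSet_le_two hK ha (encard_neighborSet_inr_le_two x)
  · exact ⟨v, hq, Or.inr hxq⟩
  · simp at hxq

end pendantSubdiv

section

variable {V W : Type*} {H : SimpleGraph V} {K : SimpleGraph W}

open pendantSubdiv in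
lemma IsMinorModel.preimage_inl {f : W → Set (V ⊕ (V ⊕ H.edgeSet))}
    (hf : IsMinorModel (pendantSubdiv H) K f) (hK : ∀ w, 2 < (K.neighborSet w).encard) :
    IsMinorModel H K fun w => Sum.inl ⁻¹' f w where
  nonempty w := by
    obtain ⟨a, ha⟩ := hf.nonempty w
    obtain ⟨v, hv, -⟩ := exists_inl_mem_of_isMinorModel hf hK ha
    exact ⟨v, hv⟩
  connected w := by
    choose ρ hρ hover using fun a : f w => exists_inl_mem_of_isMinorModel hf hK a.2
    refine (hf.connected w).of_surjective_of_adj_reachable (g := fun a => ⟨ρ a, hρ a⟩) ?_ ?_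
    · rintro ⟨v, hv⟩
      refine ⟨⟨Sum.inl v, hv⟩, Subtype.ext ?_⟩
      simpa [eq_comm] using hover ⟨Sum.inl v, hv⟩
    · intro a b hab
      rcases eq_or_adj_of_adj hab (hover a) (hover b) with h | h
      · exact (Subtype.ext h : (⟨ρ a, hρ a⟩ : Sum.inl ⁻¹' f w) = ⟨ρ b, hρ b⟩) ▸ Reachable.refl _
      · exact Adj.reachable h
  pairwise_disjoint _ _ hne := (hf.pairwise_disjoint hne).preimage Sum.inl
  exists_adj w w' hww' := by
    obtain ⟨a, ha, b, hb, hab⟩ := hf.exists_adj hww'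
    obtain ⟨u, hu, hau⟩ := exists_inl_mem_of_isMinorModel hf hK ha
    obtain ⟨v, hv, hbv⟩ := exists_inl_mem_of_isMinorModel hf hK hb
    refine ⟨u, hu, v, hv, (eq_or_adj_of_adj hab hau hbv).resolve_left ?_⟩
    rintro rfl
    exact Set.disjoint_left.mp (hf.pairwise_disjoint hww'.ne) hu hv

lemma HasMinor.of_pendantSubdiv (hK : ∀ w, 2 < (K.neighborSet w).encard)
    (h : HasMinor (pendantSubdiv H) K) : HasMinor H K := by
  obtain ⟨f, hf⟩ := hasMinor_iff.mp h
  exact hasMinor_iff.mpr ⟨_, hf.preimage_inl hK⟩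

lemma IsPlanar.pendantSubdiv (h : IsPlanar H) : IsPlanar (pendantSubdiv H) := by
  refine ⟨fun hm => h.1 (hm.of_pendantSubdiv fun w => ?_),
    fun hm => h.2 (hm.of_pendantSubdiv fun w => ?_)⟩ <;>
  · rw [encard_neighborSet_eq_degree]
    exact_mod_cast (by decide : ∀ w, 2 < degree _ w) w

end

theorem pendant_subdiv_open_cf_eq_chromatic_general {V : Type*}
    (H : SimpleGraph V) :
    (∀ k : ℕ, (∃ c : (V ⊕ (V ⊕ H.edgeSet)) → Option (Fin k),
        IsOpenCFColoring (pendantSubdiv H) k c) ↔ H.Colorable k) ∧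
    (pendantSubdiv H).Colorable 2 ∧
    (IsPlanar H → IsPlanar (pendantSubdiv H)) :=
  ⟨fun _ => ⟨fun ⟨_, hc⟩ => pendantSubdiv.colorable_of_isOpenCFColoring hc,
      fun ⟨col⟩ => ⟨_, pendantSubdiv.isOpenCFColoring_of_coloring col⟩⟩,
    pendantSubdiv.colorable_two, IsPlanar.pendantSubdiv⟩

/-- for the graph `G` obtained from `H` by attaching a pendant to each
vertex and subdividing each edge, the open-neighborhood conflict-free chromatic number
of `G` equals the chromatic number of `H` (for every `k`, `G` is open-neighborhood
conflict-free `k`-colorable iff `H` is properly `k`-colorable); moreover `G` is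
bipartite, and `G` is planar whenever `H` is. -/
theorem pendant_subdiv_open_cf_eq_chromatic {V : Type*} [Fintype V]
    (H : SimpleGraph V) :
    (∀ k : ℕ, (∃ c : (V ⊕ (V ⊕ H.edgeSet)) → Option (Fin k),
        IsOpenCFColoring (pendantSubdiv H) k c) ↔ H.Colorable k) ∧
    (pendantSubdiv H).Colorable 2 ∧
    (IsPlanar H → IsPlanar (pendantSubdiv H)) :=
  pendant_subdiv_open_cf_eq_chromatic_general H
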